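/- arXiv:2108.03753 — 4 statements merged into one kernel-verified Lean document; each statement's English description precedes it below -/
import Mathlib

section
/- For every real x, ∑_{n=1}^∞ H_n x^n/n! = e^x · ∑_{n=1}^∞ (-1)^{n-1} x^n/(n!·n), where H_n = 1 + 1/2 + ⋯ + 1/n is the n-th harmonic number. -/
/-!
Multiply the exponential series by the series of `Ein` (Cauchy product). Since
`C(N+1, m+1) = (N+1)! / (k! (m+1)!)` for `k + m = N`, the coefficient of `x^(N+1)/(N+1)!` is
`∑_{m ≤ N} (-1)^m C(N+1, m+1) / (m+1)`, and this alternating sum is the harmonic number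
`H_(N+1)`: by Pascal's rule and `C(n, k) / (k+1) = C(n+1, k+1) / (n+1)` its increment in `N`
is an alternating sum of binomial coefficients, which is `1`, divided by `N+2`.
-/

open Finset Nat

theorem sum_range_neg_one_pow_mul_choose_succ {R : Type*} [CommRing R] (n : ℕ) :
    ∑ k ∈ range (n + 1), (-1 : R) ^ k * (n + 1).choose (k + 1) = 1 := by
  have h := congrArg (Int.cast : ℤ → R) (Int.alternating_sum_range_choose_of_ne n.succ_ne_zero)
  push_cast at h
  rw [sum_range_succ'] at h
  simp only [pow_succ, mul_neg_one, neg_mul, sum_neg_distrib, pow_zero, choose_zero_right,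
    cast_one, mul_one] at h
  linear_combination -h

theorem sum_range_neg_one_pow_mul_choose_succ_div {K : Type*} [Field K] [CharZero K] (n : ℕ) :
    ∑ k ∈ range (n + 1), (-1 : K) ^ k * (n + 1).choose (k + 1) / (k + 1) =
      ∑ i ∈ range (n + 1), (1 : K) / (i + 1) := by
  induction n with
  | zero => simp
  | succ n ih =>
    have choose_div (k : ℕ) :
        ((n + 1).choose k : K) / (k + 1) = (n + 1 + 1).choose (k + 1) / ((n + 1 : ℕ) + 1) := by
      rw [div_eq_div_iff (Nat.cast_add_one_ne_zero k) (Nat.cast_add_one_ne_zero (n + 1))]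
      exact_mod_cast (mul_comm _ _).trans (Nat.add_one_mul_choose_eq (n + 1) k)
    calc ∑ k ∈ range (n + 1 + 1), (-1 : K) ^ k * (n + 1 + 1).choose (k + 1) / (k + 1)
        = ∑ k ∈ range (n + 1 + 1), (-1 : K) ^ k * (n + 1).choose (k + 1) / (k + 1)
          + ∑ k ∈ range (n + 1 + 1), (-1 : K) ^ k * (n + 1).choose k / (k + 1) := by
          rw [← sum_add_distrib]
          refine sum_congr rfl fun k _ => ?_
          rw [Nat.choose_succ_succ']
          push_cast
          ring
      _ = ∑ i ∈ range (n + 1), (1 : K) / (i + 1) + 1 / ((n + 1 : ℕ) + 1) := by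
          rw [sum_range_succ _ (n + 1), Nat.choose_succ_self, ih]
          simp only [mul_div_assoc, choose_div]
          simp only [← mul_div_assoc, ← sum_div, sum_range_neg_one_pow_mul_choose_succ,
            Nat.cast_zero, zero_div, mul_zero, add_zero]
      _ = ∑ i ∈ range (n + 1 + 1), (1 : K) / (i + 1) := (sum_range_succ _ _).symm

theorem pow_div_factorial_mul_ein_term {K : Type*} [Field K] [CharZero K] (x : K) (k m : ℕ) :
    x ^ k / k ! * ((-1) ^ m * x ^ (m + 1) / ((m + 1)! * (m + 1))) =
      (-1) ^ m * (k + m + 1).choose (m + 1) / (m + 1) * (x ^ (k + m + 1) / (k + m + 1)!) := by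
  have h : ((k + m + 1).choose (m + 1) * k ! * (m + 1)! : K) = (k + m + 1)! := by
    exact_mod_cast Nat.add_choose_mul_factorial_mul_factorial k (m + 1)
  have hc : ((k + m + 1).choose (m + 1) : K) ≠ 0 := by
    exact_mod_cast (Nat.choose_pos (by omega)).ne'
  rw [← h]
  field_simp
  ring

theorem sum_antidiagonal_pow_div_factorial_mul_ein_term {K : Type*} [Field K] [CharZero K]
    (x : K) (N : ℕ) :
    ∑ p ∈ antidiagonal N,
        x ^ p.1 / p.1 ! * ((-1) ^ p.2 * x ^ (p.2 + 1) / ((p.2 + 1)! * (p.2 + 1))) =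
      (∑ i ∈ range (N + 1), (1 : K) / (i + 1)) * x ^ (N + 1) / (N + 1)! := by
  calc _ = ∑ p ∈ antidiagonal N,
        (-1 : K) ^ p.2 * (N + 1).choose (p.2 + 1) / (p.2 + 1) * (x ^ (N + 1) / (N + 1)!) :=
        sum_congr rfl fun p hp => by
          rw [← mem_antidiagonal.mp hp, pow_div_factorial_mul_ein_term]
    _ = (∑ m ∈ range (N + 1), (-1 : K) ^ m * (N + 1).choose (m + 1) / (m + 1)) *
          (x ^ (N + 1) / (N + 1)!) := by
        rw [← sum_mul, ← Nat.sum_antidiagonal_swap, Nat.sum_antidiagonal_eq_sum_range_succ_mk]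
        rfl
    _ = _ := by rw [sum_range_neg_one_pow_mul_choose_succ_div, mul_div_assoc]

theorem summable_norm_ein_term (x : ℝ) :
    Summable fun n : ℕ => ‖(-1) ^ n * x ^ (n + 1) / ((n + 1)! * (n + 1))‖ := by
  refine .of_nonneg_of_le (fun n => norm_nonneg _) (fun n => ?_)
    ((summable_nat_add_iff 1).mpr (Real.summable_pow_div_factorial |x|))
  rw [norm_div, norm_mul, norm_pow, norm_neg, norm_one, one_pow, one_mul, norm_pow,
    Real.norm_eq_abs, norm_mul, Real.norm_natCast, ← Nat.cast_succ, Real.norm_natCast]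
  exact div_le_div_of_nonneg_left (by positivity) (by positivity)
    (le_mul_of_one_le_right (by positivity) (by simp))

theorem stmt_1 (x : ℝ) :
    ∑' n : ℕ, (∑ i ∈ Finset.range (n + 1), (1 : ℝ) / (i + 1)) * x ^ (n + 1) / (n + 1).factorial
      = Real.exp x * ∑' n : ℕ, (-1) ^ n * x ^ (n + 1) / ((n + 1).factorial * (n + 1)) := by
  rw [Real.exp_eq_exp_ℝ, NormedSpace.exp_eq_tsum_div,
    tsum_mul_tsum_eq_tsum_sum_antidiagonal_of_summable_norm
      (NormedSpace.norm_expSeries_div_summable x) (summable_norm_ein_term x)]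
  exact tsum_congr fun N => (sum_antidiagonal_pow_div_factorial_mul_ein_term x N).symm
end

section
/- For every positive integer p and every real x, ∑_{n=1}^∞ (1^p + 2^p + ⋯ + n^p) x^n/n! = E(x,p) + e^x ∫_0^x e^{-t} E(t,p) dt, where E(x,p) = ∑_{n=1}^∞ n^p x^n/n!. -/
open Finset Real

/-- `E p x = ∑_{n=1}^∞ n^p xⁿ/n!`. -/
noncomputable def E (p : ℕ) (x : ℝ) : ℝ :=
  ∑' n : ℕ, ((n : ℝ) + 1) ^ p * x ^ (n + 1) / (n + 1).factorial

/-!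
Since `∫₀ˣ e⁻ᵗ tᵏ/k! dt = 1 - e⁻ˣ ∑_{j ≤ k} xʲ/j!`, the quantity `xᵏ/k! + eˣ ∫₀ˣ e⁻ᵗ tᵏ/k! dt` is the
tail `∑_{j ≥ k} xʲ/j!` of the exponential series. Writing `E(x) = ∑ aₖ xᵏ/k!` with `aₖ = kᵖ`
(so `a₀ = 0` as `p > 0`) and integrating term by term, the right-hand side becomes
`∑ₖ aₖ ∑_{j ≥ k} xʲ/j!`. This double series converges absolutely because `k! l! ≤ (k + l)!`, and
summing it along `j` first gives `∑ⱼ (a₀ + ⋯ + aⱼ) xʲ/j!`.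
-/

open scoped Nat

theorem hasDerivAt_sum_range_pow_div_factorial (n : ℕ) (t : ℝ) :
    HasDerivAt (fun s : ℝ => ∑ k ∈ range (n + 1), s ^ k / k !)
      (∑ k ∈ range n, t ^ k / k !) t := by
  induction n with
  | zero => simpa using hasDerivAt_const t (1 : ℝ)
  | succ n ih =>
    simp only [sum_range_succ _ (n + 1)]
    refine (ih.add ((hasDerivAt_pow (n + 1) t).div_const ((n + 1)! : ℝ))).congr_deriv ?_
    rw [sum_range_succ, Nat.factorial_succ]
    push_cast
    field_simp

theorem integral_exp_neg_mul_pow_div_factorial (n : ℕ) (x : ℝ) :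
    ∫ t in (0 : ℝ)..x, exp (-t) * (t ^ n / n !)
      = 1 - exp (-x) * ∑ k ∈ range (n + 1), x ^ k / k ! := by
  have hderiv (t : ℝ) : HasDerivAt (fun s => -(exp (-s) * ∑ k ∈ range (n + 1), s ^ k / k !))
      (exp (-t) * (t ^ n / n !)) t := by
    refine ((hasDerivAt_neg t).exp.mul
      (hasDerivAt_sum_range_pow_div_factorial n t)).neg.congr_deriv ?_
    rw [sum_range_succ]
    ring
  rw [intervalIntegral.integral_eq_sub_of_hasDerivAt (fun t _ => hderiv t)
    ((by fun_prop : Continuous fun t : ℝ => exp (-t) * (t ^ n / n !)).intervalIntegrable _ _)]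
  simp [sum_range_succ']
  ring

theorem hasSum_pow_add_div_factorial (k : ℕ) (x : ℝ) :
    HasSum (fun l => x ^ (l + k) / (l + k)!)
      (x ^ k / k ! + exp x * ∫ t in (0 : ℝ)..x, exp (-t) * (t ^ k / k !)) := by
  have hvalue : x ^ k / k ! + exp x * ∫ t in (0 : ℝ)..x, exp (-t) * (t ^ k / k !)
      = exp x - ∑ j ∈ range k, x ^ j / j ! := by
    rw [integral_exp_neg_mul_pow_div_factorial, sum_range_succ, mul_sub, ← mul_assoc, ← exp_add,
      add_neg_cancel, exp_zero]
    ring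
  rw [hvalue]
  exact (hasSum_nat_add_iff' k).2 (exp_eq_exp_ℝ ▸ NormedSpace.expSeries_div_hasSum_exp x)

theorem hasSum_intervalIntegral_mul_tsum_pow_div_factorial {g : ℝ → ℝ} (hg : Continuous g)
    {a : ℕ → ℝ} {x : ℝ} (ha : Summable fun n => |a n| * |x| ^ n / n !) :
    HasSum (fun n => a n * ∫ t in (0 : ℝ)..x, g t * (t ^ n / n !))
      (∫ t in (0 : ℝ)..x, g t * ∑' n, a n * t ^ n / n !) := by
  let K : TopologicalSpace.Compacts ℝ := ⟨Set.uIcc 0 x, isCompact_uIcc⟩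
  let f (n : ℕ) : C(ℝ, ℝ) := ⟨fun t => g t * (a n * t ^ n / n !), by fun_prop⟩
  let gK := (⟨g, hg⟩ : C(ℝ, ℝ)).restrict K
  have hbound (n : ℕ) : ‖(f n).restrict K‖ ≤ ‖gK‖ * (|a n| * |x| ^ n / n !) := by
    refine (ContinuousMap.norm_le _ (by positivity)).2 fun t => ?_
    have ht : |(t : ℝ)| ≤ |x| := by simpa using Set.abs_sub_left_of_mem_uIcc t.2
    have hg_le : |g t| ≤ ‖gK‖ := ContinuousMap.norm_coe_le_norm gK t
    simp only [ContinuousMap.restrict_apply, ContinuousMap.coe_mk, norm_mul, norm_div,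
      norm_pow, Real.norm_eq_abs, Nat.abs_cast, f]
    gcongr
  have hsum := intervalIntegral.hasSum_intervalIntegral_of_summable_norm
    (Summable.of_nonneg_of_le (fun _ => norm_nonneg _) hbound (ha.mul_left _))
  simp only [ContinuousMap.coe_mk, f, tsum_mul_left] at hsum
  have hterm (n : ℕ) : ∫ t in (0 : ℝ)..x, g t * (a n * t ^ n / n !)
      = a n * ∫ t in (0 : ℝ)..x, g t * (t ^ n / n !) := by
    rw [← intervalIntegral.integral_const_mul]
    congr with t
    ring
  simpa only [hterm] using hsum

theorem HasSum.sum_antidiagonal {A α : Type*} [AddCommMonoid A] [HasAntidiagonal A]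
    [AddCommMonoid α] [TopologicalSpace α] [ContinuousAdd α] [RegularSpace α]
    {f : A × A → α} {s : α} (h : HasSum f s) :
    HasSum (fun n => ∑ kl ∈ antidiagonal n, f kl) s :=
  (HasAntidiagonal.sigmaAntidiagonalEquivProd.hasSum_iff.2 h).sigma fun _ => Finset.hasSum _ _

theorem summable_mul_pow_add_div_factorial {a : ℕ → ℝ} {x : ℝ}
    (ha : Summable fun n => |a n| * |x| ^ n / n !) :
    Summable fun kl : ℕ × ℕ => a kl.1 * (x ^ (kl.2 + kl.1) / (kl.2 + kl.1)!) := by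
  refine (ha.mul_of_nonneg (Real.summable_pow_div_factorial |x|) (fun _ => by positivity)
    (fun _ => by positivity)).of_norm_bounded fun ⟨k, l⟩ => ?_
  have hfact : (k ! * l ! : ℝ) ≤ (l + k)! := by
    rw [add_comm]
    exact_mod_cast Nat.le_of_dvd (Nat.factorial_pos _)
      (Nat.factorial_mul_factorial_dvd_factorial_add k l)
  simp only [norm_mul, norm_div, norm_pow, Real.norm_eq_abs, Nat.abs_cast]
  rw [pow_add]
  calc |a k| * (|x| ^ l * |x| ^ k / (l + k)!)
      ≤ |a k| * (|x| ^ l * |x| ^ k / (k ! * l !)) := by gcongr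
    _ = |a k| * |x| ^ k / k ! * (|x| ^ l / l !) := by field_simp

theorem summable_mul_pow_div_factorial {a : ℕ → ℝ} {x : ℝ}
    (ha : Summable fun n => |a n| * |x| ^ n / n !) : Summable fun n => a n * x ^ n / n ! :=
  ha.of_norm_bounded fun _ => by simp

theorem hasSum_sum_range_mul_pow_div_factorial {a : ℕ → ℝ} {x : ℝ}
    (ha : Summable fun n => |a n| * |x| ^ n / n !) :
    HasSum (fun n => (∑ k ∈ range (n + 1), a k) * x ^ n / n !)
      (∑' n, a n * x ^ n / n ! +
        exp x * ∫ t in (0 : ℝ)..x, exp (-t) * ∑' n, a n * t ^ n / n !) := by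
  have hF := summable_mul_pow_add_div_factorial ha
  have hrows := hF.hasSum.prod_fiberwise fun k => (hasSum_pow_add_div_factorial k x).mul_left (a k)
  have hcols := (summable_mul_pow_div_factorial ha).hasSum.add
    ((hasSum_intervalIntegral_mul_tsum_pow_div_factorial (g := fun t => exp (-t)) (by fun_prop)
      ha).mul_left (exp x))
  rw [← hrows.unique (hcols.congr_fun fun k => by ring)]
  refine hF.hasSum.sum_antidiagonal.congr_fun fun n => ?_
  rw [Nat.sum_antidiagonal_eq_sum_range_succ_mk, sum_mul, sum_div]
  refine sum_congr rfl fun k hk => ?_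
  rw [Nat.sub_add_cancel (Nat.lt_succ_iff.1 (mem_range.1 hk))]
  ring

theorem summable_abs_natCast_pow_mul_pow_div_factorial (p : ℕ) (x : ℝ) :
    Summable fun n : ℕ => |(n : ℝ) ^ p| * |x| ^ n / n ! := by
  refine (Real.summable_pow_div_factorial (2 ^ p * |x|)).of_nonneg_of_le (fun _ => by positivity)
    fun n => ?_
  have hn : (n : ℝ) ≤ 2 ^ n := by exact_mod_cast n.lt_two_pow_self.le
  rw [abs_of_nonneg (by positivity), mul_pow, ← pow_mul, mul_comm p, pow_mul]
  gcongr

theorem stmt_3 (p : ℕ) (hp : 0 < p) (x : ℝ) :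
    ∑' n : ℕ, (∑ k ∈ Finset.Icc 1 (n + 1), (k : ℝ) ^ p) * x ^ (n + 1) / (n + 1).factorial
      = E p x + Real.exp x * ∫ t in (0 : ℝ)..x, Real.exp (-t) * E p t := by
  have hzero : (0 : ℝ) ^ p = 0 := zero_pow hp.ne'
  have hE (t : ℝ) : E p t = ∑' n : ℕ, (n : ℝ) ^ p * t ^ n / n ! := by
    have h := (hasSum_nat_add_iff' 1).2
      (summable_mul_pow_div_factorial (summable_abs_natCast_pow_mul_pow_div_factorial p t)).hasSum
    simpa [E, hzero] using h.tsum_eq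
  have h := (hasSum_nat_add_iff' 1).2
    (hasSum_sum_range_mul_pow_div_factorial (summable_abs_natCast_pow_mul_pow_div_factorial p x))
  simp only [hE]
  convert h.tsum_eq using 1
  · refine tsum_congr fun n => ?_
    rw [range_eq_Ico, sum_eq_sum_Ico_succ_bot (by omega), ← Ico_add_one_right_eq_Icc]
    simp [hzero]
  · simp [hzero]
end

section
/- For every positive integer p and every real x, ∑_{n=1}^∞ (1^p + 2^p + ⋯ + n^p) x^n/n! = e^x · ∑_{k=1}^{p+1} S(p+1,k) x^k / k, where S denotes Stirling numbers of the second kind. -/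
/-!
Expanding `m ^ n = ∑ₖ S(n, k) m(m-1)⋯(m-k+1)` at `m = i + 1` and dividing by `i + 1` gives
`(i + 1) ^ p = ∑ⱼ S(p+1, j+1) j! C(i, j)`; summing over `i < N` with Pascal's rule,
`1 ^ p + ⋯ + N ^ p = ∑ⱼ S(p+1, j+1) j! C(N, j+1)`. Since `∑_N C(N, k) x^N / N! = x^k / k! · e^x`,
the series equals `e^x ∑ⱼ S(p+1, j+1) j! x^(j+1) / (j+1)!`, which is the right-hand side.
-/

open Finset Real

/-- Stirling numbers of the second kind. -/
def stirling2 : ℕ → ℕ → ℕ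
  | 0, 0 => 1
  | 0, _ + 1 => 0
  | _ + 1, 0 => 0
  | p + 1, k + 1 => (k + 1) * stirling2 p (k + 1) + stirling2 p k

theorem stirling2_eq_stirlingSecond : stirling2 = Nat.stirlingSecond := by
  funext n k
  induction n generalizing k with
  | zero => cases k <;> rfl
  | succ n ih => cases k <;> simp [stirling2, Nat.stirlingSecond_succ_succ, ih]

namespace Nat

theorem mul_descFactorial_eq_descFactorial_succ_add (m k : ℕ) :
    m * m.descFactorial k = m.descFactorial (k + 1) + k * m.descFactorial k := by
  rcases le_or_gt k m with h | h
  · rw [descFactorial_succ, ← Nat.add_mul, Nat.sub_add_cancel h]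
  · simp [descFactorial_eq_zero_iff_lt.2 h]

theorem pow_eq_sum_stirlingSecond_mul_descFactorial (n m : ℕ) :
    m ^ n = ∑ k ∈ range (n + 1), stirlingSecond n k * m.descFactorial k := by
  induction n with
  | zero => simp
  | succ n ih =>
    have hS : stirlingSecond n (n + 1) = 0 := stirlingSecond_eq_zero_of_lt n.lt_succ_self
    calc m ^ (n + 1)
        = ∑ k ∈ range (n + 1), stirlingSecond n k * (m * m.descFactorial k) := by
          rw [pow_succ', ih, mul_sum]
          exact sum_congr rfl fun k _ ↦ by ring
      _ = ∑ k ∈ range (n + 1), stirlingSecond n k * m.descFactorial (k + 1)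
          + ∑ k ∈ range (n + 2), k * stirlingSecond n k * m.descFactorial k := by
          rw [sum_range_succ _ (n + 1), hS, mul_zero, zero_mul, add_zero, ← sum_add_distrib]
          exact sum_congr rfl fun k _ ↦ by rw [mul_descFactorial_eq_descFactorial_succ_add]; ring
      _ = ∑ k ∈ range (n + 2), stirlingSecond (n + 1) k * m.descFactorial k := by
          rw [sum_range_succ' _ (n + 1), sum_range_succ' _ (n + 1)]
          simp only [stirlingSecond_succ_succ, stirlingSecond_succ_zero, zero_mul, add_zero,
            ← sum_add_distrib]
          exact sum_congr rfl fun k _ ↦ by ring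

theorem succ_pow_eq_sum_stirlingSecond_mul_descFactorial (n m : ℕ) :
    (m + 1) ^ n = ∑ j ∈ range (n + 1), stirlingSecond (n + 1) (j + 1) * m.descFactorial j := by
  apply Nat.eq_of_mul_eq_mul_left m.add_one_pos
  rw [← pow_succ', pow_eq_sum_stirlingSecond_mul_descFactorial, sum_range_succ', mul_sum]
  simp only [stirlingSecond_succ_zero, zero_mul, add_zero, succ_descFactorial_succ]
  exact sum_congr rfl fun j _ ↦ by ring

theorem sum_Icc_pow_eq_sum_stirlingSecond_mul_choose (n N : ℕ) :
    ∑ i ∈ Icc 1 N, i ^ n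
      = ∑ j ∈ range (n + 1), stirlingSecond (n + 1) (j + 1) * j ! * N.choose (j + 1) := by
  induction N with
  | zero => simp
  | succ N ih =>
    rw [sum_Icc_succ_top N.succ_pos, ih, succ_pow_eq_sum_stirlingSecond_mul_descFactorial,
      ← sum_add_distrib]
    refine sum_congr rfl fun j _ ↦ ?_
    rw [descFactorial_eq_factorial_mul_choose, choose_succ_succ' N j]
    ring

end Nat

theorem sum_Icc_one_eq_sum_range {M : Type*} [AddCommMonoid M] (f : ℕ → M) (n : ℕ) :
    ∑ k ∈ Icc 1 n, f k = ∑ j ∈ range n, f (j + 1) := by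
  rw [← Ico_add_one_right_eq_Icc, sum_Ico_eq_sum_range, Nat.add_sub_cancel]
  exact sum_congr rfl fun j _ ↦ by rw [add_comm]

section

open Nat

variable {𝕂 : Type*} [NormedField 𝕂] [NormedAlgebra ℚ 𝕂] [CompleteSpace 𝕂]

theorem hasSum_choose_mul_pow_div_factorial (k : ℕ) (x : 𝕂) :
    HasSum (fun n ↦ (n.choose k : 𝕂) * x ^ n / n !) (x ^ k / k ! * NormedSpace.exp x) := by
  rw [← hasSum_nat_add_iff' k, sum_eq_zero fun n hn ↦ by
    simp [choose_eq_zero_of_lt (mem_range.1 hn)], sub_zero]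
  have hterm (j : ℕ) :
      ((j + k).choose k : 𝕂) * x ^ (j + k) / (j + k)! = x ^ k / k ! * (x ^ j / j !) := by
    have := algebraRat.charZero 𝕂
    rw [add_comm j k, cast_add_choose, pow_add]
    field_simp [(k + j).factorial_ne_zero]
  simpa only [hterm] using (NormedSpace.expSeries_div_hasSum_exp x).mul_left (x ^ k / k !)

theorem hasSum_sum_Icc_pow_mul_pow_div_factorial (p : ℕ) (x : 𝕂) :
    HasSum (fun N : ℕ ↦ (∑ i ∈ Icc 1 N, (i : 𝕂) ^ p) * x ^ N / N !)
      (NormedSpace.exp x * ∑ k ∈ Icc 1 (p + 1), (stirlingSecond (p + 1) k : 𝕂) * x ^ k / k) := by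
  have := algebraRat.charZero 𝕂
  have hterm (N : ℕ) : (∑ i ∈ Icc 1 N, (i : 𝕂) ^ p) * x ^ N / N ! =
      ∑ j ∈ range (p + 1), (stirlingSecond (p + 1) (j + 1) * j ! : 𝕂) *
        ((N.choose (j + 1) : 𝕂) * x ^ N / N !) := by
    have h := congrArg (Nat.cast (R := 𝕂)) (sum_Icc_pow_eq_sum_stirlingSecond_mul_choose p N)
    push_cast at h
    rw [h, sum_mul, sum_div]
    exact sum_congr rfl fun j _ ↦ by ring
  have hvalue : ∑ j ∈ range (p + 1), (stirlingSecond (p + 1) (j + 1) * j ! : 𝕂) *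
      (x ^ (j + 1) / (j + 1)! * NormedSpace.exp x) =
      NormedSpace.exp x * ∑ k ∈ Icc 1 (p + 1), (stirlingSecond (p + 1) k : 𝕂) * x ^ k / k := by
    rw [sum_Icc_one_eq_sum_range, mul_sum]
    refine sum_congr rfl fun j _ ↦ ?_
    push_cast [factorial_succ]
    field_simp [j.factorial_ne_zero]
  rw [← hvalue]
  simpa only [hterm] using hasSum_sum fun j _ ↦
    (hasSum_choose_mul_pow_div_factorial (j + 1) x).mul_left
      (stirlingSecond (p + 1) (j + 1) * j ! : 𝕂)

end

theorem stmt_6_general (p : ℕ) (x : ℝ) :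
    ∑' n : ℕ, (∑ k ∈ Finset.Icc 1 (n + 1), (k : ℝ) ^ p) * x ^ (n + 1) / (n + 1).factorial
      = Real.exp x * ∑ k ∈ Finset.Icc 1 (p + 1), (stirling2 (p + 1) k : ℝ) * x ^ k / k := by
  have h := (hasSum_nat_add_iff' 1).2 (hasSum_sum_Icc_pow_mul_pow_div_factorial p x)
  rw [Real.exp_eq_exp_ℝ, stirling2_eq_stirlingSecond]
  simpa using h.tsum_eq

theorem stmt_6 (p : ℕ) (hp : 0 < p) (x : ℝ) :
    ∑' n : ℕ, (∑ k ∈ Finset.Icc 1 (n + 1), (k : ℝ) ^ p) * x ^ (n + 1) / (n + 1).factorial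
      = Real.exp x * ∑ k ∈ Finset.Icc 1 (p + 1), (stirling2 (p + 1) k : ℝ) * x ^ k / k :=
  stmt_6_general p x
end

section
/- For every nonnegative integer r, every positive integer p, and every real x with |x| < 1, ∑_{n=1}^∞ n^p ( 1/(1-x)^{r+1} - ∑_{j=0}^n C(r+j, j) x^j ) = (1/r!) d^r/dx^r [ x^r/(1-x)² ω_p(x/(1-x)) ] - (1/(1-x)^{r+1}) ω_{p,r+1}(x/(1-x)). -/
open Finset Real

/-- The geometric (Fubini) polynomial. -/
noncomputable def geomPoly (p : ℕ) (x : ℝ) : ℝ :=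
  ∑ k ∈ Finset.range (p + 1), (stirling2 p k : ℝ) * k.factorial * x ^ k

/-- The generalized geometric polynomial $\omega_{p,r+1}$. -/
noncomputable def genGeomPoly (p r : ℕ) (x : ℝ) : ℝ :=
  (1 / r.factorial) * ∑ k ∈ Finset.range (p + 1), (stirling2 p k : ℝ) * (k + r).factorial * x ^ k

/-!
Swapping the order of summation turns the left-hand side into `∑ⱼ C(r+j, j) Wⱼ xʲ`, where
`Wⱼ = ∑_{m<j} mᵖ` (the term `n = 0` vanishes because `0ᵖ = 0`). Expanding
`mᵖ = ∑ₖ S(p,k) k! C(m,k)` and using the hockey-stick identity, `Wⱼ = ∑ₖ S(p,k) k! C(j,k+1)`, so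
`ω_p(y/(1-y)) / (1-y)² = ∑ⱼ W_{j+1} yʲ`; differentiating `yʳ` times this power series `r` times
gives `(1/r!) Dʳ[…](x) = ∑ⱼ C(r+j, j) W_{j+1} xʲ`. In the same way
`C(r+j, j) C(j, k) = C(k+r, k) C(j+r, k+r)` gives
`ω_{p,r+1}(x/(1-x)) / (1-x)^{r+1} = ∑ⱼ C(r+j, j) jᵖ xʲ`, and `W_{j+1} - jᵖ = Wⱼ`.
-/

open FormalMultilinearSeries
open scoped ENNReal

theorem stirling2_eq_zero_of_lt : ∀ {p k : ℕ}, p < k → stirling2 p k = 0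
  | _, 0, h => absurd h (Nat.not_lt_zero _)
  | 0, _ + 1, _ => rfl
  | p + 1, k + 1, h => by
    simp only [stirling2, stirling2_eq_zero_of_lt (Nat.lt_of_succ_lt_succ h),
      stirling2_eq_zero_of_lt (Nat.lt_of_succ_lt h), mul_zero]

theorem mul_descFactorial_eq_descFactorial_succ_add (m k : ℕ) :
    m * m.descFactorial k = m.descFactorial (k + 1) + k * m.descFactorial k := by
  rw [Nat.descFactorial_succ, ← add_mul]
  rcases le_or_gt k m with h | h
  · rw [Nat.sub_add_cancel h]
  · simp [Nat.descFactorial_eq_zero_iff_lt.mpr h]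

theorem pow_eq_sum_stirling2_mul_descFactorial (p m : ℕ) :
    m ^ p = ∑ k ∈ range (p + 1), stirling2 p k * m.descFactorial k := by
  induction p with
  | zero => simp [stirling2]
  | succ p ih =>
    have hshift : ∑ k ∈ range (p + 1), k * stirling2 p k * m.descFactorial k
        = ∑ k ∈ range (p + 1), (k + 1) * stirling2 p (k + 1) * m.descFactorial (k + 1) := by
      rw [sum_range_succ', sum_range_succ, stirling2_eq_zero_of_lt (Nat.lt_succ_self p)]
      simp
    calc m ^ (p + 1)
        = ∑ k ∈ range (p + 1), stirling2 p k * (m * m.descFactorial k) := by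
          rw [pow_succ', ih, mul_sum]; exact sum_congr rfl fun k _ => by ring
      _ = ∑ k ∈ range (p + 1), stirling2 p k * m.descFactorial (k + 1)
            + ∑ k ∈ range (p + 1), k * stirling2 p k * m.descFactorial k := by
          rw [← sum_add_distrib]
          exact sum_congr rfl fun k _ => by rw [mul_descFactorial_eq_descFactorial_succ_add]; ring
      _ = ∑ k ∈ range (p + 1), ((k + 1) * stirling2 p (k + 1) + stirling2 p k)
            * m.descFactorial (k + 1) := by
          rw [hshift, ← sum_add_distrib]
          exact sum_congr rfl fun k _ => by ring
      _ = ∑ k ∈ range (p + 1 + 1), stirling2 (p + 1) k * m.descFactorial k := by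
          rw [sum_range_succ' _ (p + 1)]
          simp [stirling2]

theorem sum_range_choose_eq_choose_succ (j k : ℕ) :
    ∑ m ∈ range j, m.choose k = j.choose (k + 1) := by
  induction j with
  | zero => simp
  | succ j ih => rw [sum_range_succ, ih, Nat.choose_succ_succ', add_comm]

theorem add_choose_mul_choose (r j k : ℕ) :
    (r + j).choose j * j.choose k = (k + r).choose k * (j + r).choose (k + r) := by
  have h := Nat.choose_mul (n := j + r) (k := k + r) (s := r) (Nat.le_add_left r k)
  rw [Nat.add_sub_cancel, Nat.add_sub_cancel] at h
  rw [add_comm r j, Nat.choose_symm_add, Nat.choose_symm_add, mul_comm _ ((j + r).choose _), h]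

theorem cast_pow_eq_sum_stirling2 (p m : ℕ) :
    (m : ℝ) ^ p = ∑ k ∈ range (p + 1), (stirling2 p k : ℝ) * k.factorial * m.choose k := by
  simp [← Nat.cast_pow, pow_eq_sum_stirling2_mul_descFactorial,
    Nat.descFactorial_eq_factorial_mul_choose, mul_assoc]

theorem sum_range_cast_pow_eq_sum_stirling2 (p j : ℕ) :
    ∑ m ∈ range j, (m : ℝ) ^ p
      = ∑ k ∈ range (p + 1), (stirling2 p k : ℝ) * k.factorial * j.choose (k + 1) := by
  simp_rw [cast_pow_eq_sum_stirling2 p, sum_comm (s := range j), ← mul_sum]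
  exact_mod_cast sum_congr rfl fun k _ => by rw [sum_range_choose_eq_choose_succ]

theorem hasSum_choose_add_mul_pow (k m : ℕ) {x : ℝ} (hx : |x| < 1) :
    HasSum (fun j => ((j + m).choose (k + m) : ℝ) * x ^ j) (x ^ k / (1 - x) ^ (k + m + 1)) := by
  have h := (hasSum_choose_mul_geometric_of_norm_lt_one (k + m)
    (by rwa [Real.norm_eq_abs] : ‖x‖ < 1)).mul_left (x ^ k)
  rw [← hasSum_nat_add_iff' k, sum_eq_zero fun j hj => by
    rw [Nat.choose_eq_zero_of_lt (by rw [mem_range] at hj; omega), Nat.cast_zero, zero_mul],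
    sub_zero, div_eq_mul_one_div]
  exact h.congr_fun fun j => by rw [add_assoc, pow_add]; ring

theorem hasSum_choose_mul_choose_mul_pow (r k : ℕ) {x : ℝ} (hx : |x| < 1) :
    HasSum (fun j => ((r + j).choose j * j.choose k : ℝ) * x ^ j)
      ((k + r).choose k * x ^ k / (1 - x) ^ (k + r + 1)) := by
  rw [mul_div_assoc]
  refine ((hasSum_choose_add_mul_pow k r hx).mul_left _).congr_fun fun j => ?_
  rw [← mul_assoc]
  congr 1
  exact_mod_cast add_choose_mul_choose r j k

theorem hasSum_sum_range_pow_mul_pow_geomPoly (p : ℕ) {y : ℝ} (hy : |y| < 1) :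
    HasSum (fun j => (∑ m ∈ range (j + 1), (m : ℝ) ^ p) * y ^ j)
      (1 / (1 - y) ^ 2 * geomPoly p (y / (1 - y))) := by
  have hy1 : 1 - y ≠ 0 := by linarith [(abs_lt.mp hy).2]
  have h := hasSum_sum fun k (_ : k ∈ range (p + 1)) =>
    (hasSum_choose_add_mul_pow k 1 hy).mul_left ((stirling2 p k : ℝ) * k.factorial)
  have hval : 1 / (1 - y) ^ 2 * geomPoly p (y / (1 - y))
      = ∑ k ∈ range (p + 1),
          (stirling2 p k : ℝ) * k.factorial * (y ^ k / (1 - y) ^ (k + 1 + 1)) := by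
    unfold geomPoly
    rw [mul_sum]
    refine sum_congr rfl fun k _ => ?_
    rw [div_pow]
    field_simp
    ring
  rw [hval]
  exact h.congr_fun fun j => by simp_rw [sum_range_cast_pow_eq_sum_stirling2, sum_mul, mul_assoc]

theorem hasSum_choose_mul_pow_mul_pow_genGeomPoly (r p : ℕ) {x : ℝ} (hx : |x| < 1) :
    HasSum (fun j => ((r + j).choose j : ℝ) * (j : ℝ) ^ p * x ^ j)
      (1 / (1 - x) ^ (r + 1) * genGeomPoly p r (x / (1 - x))) := by
  have hx1 : 1 - x ≠ 0 := by linarith [(abs_lt.mp hx).2]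
  have h := hasSum_sum fun k (_ : k ∈ range (p + 1)) =>
    (hasSum_choose_mul_choose_mul_pow r k hx).mul_left ((stirling2 p k : ℝ) * k.factorial)
  have hval : 1 / (1 - x) ^ (r + 1) * genGeomPoly p r (x / (1 - x))
      = ∑ k ∈ range (p + 1), (stirling2 p k : ℝ) * k.factorial
          * ((k + r).choose k * x ^ k / (1 - x) ^ (k + r + 1)) := by
    unfold genGeomPoly
    rw [mul_sum, mul_sum]
    refine sum_congr rfl fun k _ => ?_
    rw [← Nat.add_choose_mul_factorial_mul_factorial k r, ← Nat.choose_symm_add, div_pow]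
    push_cast
    field_simp
    ring
  rw [hval]
  refine h.congr_fun fun j => ?_
  simp_rw [cast_pow_eq_sum_stirling2 p j, mul_sum, sum_mul]
  exact sum_congr rfl fun k _ => by ring

section PowerSeries

variable {𝕜 : Type*} [NontriviallyNormedField 𝕜] [CompleteSpace 𝕜]

theorem HasFPowerSeriesOnBall.deriv_ofScalars {f : 𝕜 → 𝕜} {a : ℕ → 𝕜} {R : ℝ≥0∞}
    (h : HasFPowerSeriesOnBall f (ofScalars 𝕜 a) 0 R) :
    HasFPowerSeriesOnBall (deriv f) (ofScalars 𝕜 fun n => (n + 1) * a (n + 1)) 0 R := by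
  convert (ContinuousLinearMap.apply 𝕜 𝕜 (1 : 𝕜)).comp_hasFPowerSeriesOnBall h.fderiv using 1
  · rfl
  ext n
  simp [ContinuousLinearMap.compFormalMultilinearSeries_apply]

theorem HasFPowerSeriesOnBall.hasSum_iteratedDeriv_ofScalars {f : 𝕜 → 𝕜} {a : ℕ → 𝕜}
    {R : ℝ≥0∞} (h : HasFPowerSeriesOnBall f (ofScalars 𝕜 a) 0 R) (k : ℕ) {y : 𝕜}
    (hy : y ∈ Metric.eball 0 R) :
    HasSum (fun n => ((n + k).descFactorial k : 𝕜) * a (n + k) * y ^ n) (iteratedDeriv k f y) := by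
  induction k generalizing f a with
  | zero => simpa [mul_comm] using h.hasSum hy
  | succ k ih =>
    rw [iteratedDeriv_succ']
    convert ih h.deriv_ofScalars using 2 with n
    rw [← add_assoc, Nat.succ_descFactorial_succ]
    push_cast
    ring

end PowerSeries

theorem hasFPowerSeriesOnBall_ofScalars_of_hasSum {f : ℝ → ℝ} {a : ℕ → ℝ}
    (h : ∀ y : ℝ, |y| < 1 → HasSum (fun n => a n * y ^ n) (f y)) :
    HasFPowerSeriesOnBall f (ofScalars ℝ a) 0 1 where
  r_le := ENNReal.le_of_forall_nnreal_lt fun t ht => by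
    refine (ofScalars ℝ a).le_radius_of_tendsto (l := 0) ?_
    have ht' : |(t : ℝ)| < 1 := by
      rw [NNReal.abs_eq]; exact_mod_cast ht
    simpa [ofScalars_norm] using (h t ht').summable.tendsto_atTop_zero.norm
  r_pos := one_pos
  hasSum hy := by
    simpa [ofScalars_apply_eq, mul_comm] using
      h _ (by simpa [enorm_eq_nnnorm, ← Real.norm_eq_abs, ← coe_nnnorm] using hy)

-- Both sides sum `w n * a j` over the pairs `n < j`: by rows `n` on the left, by columns `j` on
-- the right.
theorem hasSum_mul_tsum_nat_add {w a : ℕ → ℝ}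
    (h : Summable fun j => (∑ n ∈ range j, |w n|) * |a j|) :
    HasSum (fun n => w n * ∑' i, a (i + n + 1)) (∑' j, (∑ n ∈ range j, w n) * a j) := by
  let H : ℕ × ℕ → ℝ := fun q => if q.2 < q.1 then w q.2 * a q.1 else 0
  have hH_fiber (j : ℕ) (g : ℝ → ℝ) (hg : g 0 = 0) :
      ∑' n, g (H (j, n)) = ∑ n ∈ range j, g (w n * a j) := by
    rw [tsum_eq_sum (s := range j) fun n hn => by rw [mem_range] at hn; simp [H, hn, hg]]
    exact sum_congr rfl fun n hn => by simp_all [H]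
  have hH : Summable H := by
    refine .of_abs ((summable_prod_of_nonneg fun q => abs_nonneg (H q)).mpr ⟨fun j => ?_, ?_⟩)
    · exact summable_of_ne_finset_zero (s := range j) fun n hn => by simp_all [H]
    · simpa [hH_fiber _ _ abs_zero, abs_mul, sum_mul] using h
  let ψ : ℕ × ℕ → ℕ × ℕ := fun q => (q.2 + q.1 + 1, q.1)
  have hψ : Function.Injective ψ := fun q q' hq => by
    simp only [ψ, Prod.mk.injEq] at hq
    exact Prod.ext hq.2 (by omega)
  have hsupp : ∀ q ∉ Set.range ψ, H q = 0 := fun q hq => by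
    refine if_neg fun hlt => hq ⟨(q.2, q.1 - q.2 - 1), Prod.ext ?_ rfl⟩
    simp only [ψ]; omega
  have hsum : HasSum (H ∘ ψ) (∑' j, (∑ n ∈ range j, w n) * a j) := by
    rw [hψ.hasSum_iff hsupp]
    convert hH.hasSum using 1
    rw [hH.tsum_prod]
    exact tsum_congr fun j => by rw [sum_mul]; exact (hH_fiber j id rfl).symm
  refine hsum.prod_fiberwise fun n => ?_
  have hfib : ∀ i, H (ψ (n, i)) = w n * a (i + n + 1) := fun i => by simp [H, ψ]
  simpa [hfib, tsum_mul_left] using (hsum.summable.prod_factor n).hasSum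

theorem HasSum.pow_mul_shift {g : ℕ → ℝ} {s y : ℝ} (h : HasSum (fun n => g n * y ^ n) s)
    (r : ℕ) : HasSum (fun n => (if r ≤ n then g (n - r) else 0) * y ^ n) (y ^ r * s) := by
  rw [← hasSum_nat_add_iff' r, sum_eq_zero fun n hn => by simp_all, sub_zero]
  exact (h.mul_left (y ^ r)).congr_fun fun n => by
    simp only [Nat.le_add_left, if_true, Nat.add_sub_cancel, pow_add]; ring

theorem hasSum_choose_mul_iteratedDeriv_pow_mul {G : ℝ → ℝ} {g : ℕ → ℝ}
    (hG : ∀ y : ℝ, |y| < 1 → HasSum (fun n => g n * y ^ n) (G y)) (r : ℕ) {x : ℝ}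
    (hx : |x| < 1) :
    HasSum (fun n => ((r + n).choose n : ℝ) * g n * x ^ n)
      (1 / r.factorial * iteratedDeriv r (fun y => y ^ r * G y) x) := by
  have hF := hasFPowerSeriesOnBall_ofScalars_of_hasSum fun y hy => (hG y hy).pow_mul_shift r
  have hx' : x ∈ Metric.eball 0 1 := by
    simpa [enorm_eq_nnnorm, ← Real.norm_eq_abs, ← coe_nnnorm] using hx
  refine ((hF.hasSum_iteratedDeriv_ofScalars r hx').mul_left _).congr_fun fun n => ?_
  rw [if_pos (Nat.le_add_left r n), Nat.add_sub_cancel, Nat.descFactorial_eq_factorial_mul_choose,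
    add_comm r n, ← Nat.choose_symm_add]
  push_cast
  field_simp

theorem tsum_succ_pow_mul_tail_eq {p : ℕ} (hp : p ≠ 0) (r : ℕ) {x : ℝ} (hx : |x| < 1) :
    ∑' n : ℕ, ((n : ℝ) + 1) ^ p *
        (1 / (1 - x) ^ (r + 1) - ∑ j ∈ range (n + 2), ((r + j).choose j : ℝ) * x ^ j)
      = ∑' j : ℕ, ((r + j).choose j : ℝ) * (∑ m ∈ range j, (m : ℝ) ^ p) * x ^ j := by
  set a : ℕ → ℝ := fun j => ((r + j).choose j : ℝ) * x ^ j
  have ha : HasSum a (1 / (1 - x) ^ (r + 1)) := by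
    simpa [a] using hasSum_choose_mul_choose_mul_pow r 0 hx
  have htail (n : ℕ) :
      1 / (1 - x) ^ (r + 1) - ∑ j ∈ range (n + 2), a j = ∑' i, a (i + (n + 1) + 1) :=
    ((hasSum_nat_add_iff' (n + 2)).mpr ha).tsum_eq.symm
  have habs : Summable fun j => (∑ m ∈ range j, |(m : ℝ) ^ p|) * |a j| := by
    have hx' : |(|x|)| < 1 := by rwa [abs_abs]
    refine (summable_sum fun k (_ : k ∈ range (p + 1)) =>
      ((hasSum_choose_mul_choose_mul_pow r (k + 1) hx').summable.mul_left
        ((stirling2 p k : ℝ) * k.factorial))).congr fun j => ?_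
    simp only [a, abs_mul, abs_pow, Nat.abs_cast, sum_range_cast_pow_eq_sum_stirling2, sum_mul]
    exact sum_congr rfl fun k _ => by ring
  have h := (hasSum_nat_add_iff' 1).mpr (hasSum_mul_tsum_nat_add habs)
  simp only [range_one, sum_singleton, Nat.cast_zero, zero_pow hp, zero_mul, sub_zero,
    Nat.cast_add, Nat.cast_one] at h
  simp_rw [htail, h.tsum_eq]
  exact tsum_congr fun j => by ring

theorem stmt_19 (r : ℕ) (p : ℕ) (hp : 0 < p) (x : ℝ) (hx : |x| < 1) :
    ∑' n : ℕ, ((n : ℝ) + 1) ^ p *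
        (1 / (1 - x) ^ (r + 1) - ∑ j ∈ Finset.range (n + 2), ((r + j).choose j : ℝ) * x ^ j)
      = (1 / r.factorial) *
          iteratedDeriv r (fun y => y ^ r / (1 - y) ^ 2 * geomPoly p (y / (1 - y))) x
        - (1 / (1 - x) ^ (r + 1)) * genGeomPoly p r (x / (1 - x)) := by
  have h1 := hasSum_choose_mul_iteratedDeriv_pow_mul
    (fun y hy => hasSum_sum_range_pow_mul_pow_geomPoly p hy) r hx
  have h2 := hasSum_choose_mul_pow_mul_pow_genGeomPoly r p hx
  have hF : (fun y : ℝ => y ^ r / (1 - y) ^ 2 * geomPoly p (y / (1 - y)))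
      = fun y => y ^ r * (1 / (1 - y) ^ 2 * geomPoly p (y / (1 - y))) := by
    funext y; ring
  rw [tsum_succ_pow_mul_tail_eq hp.ne' r hx, hF, ← (h1.sub h2).tsum_eq]
  exact tsum_congr fun j => by rw [sum_range_succ]; ring
end
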